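/- For ε > 0 and R > 0 define χ_{R,ε}(x) = e^{ε(|x|−R)} − 1 for R < |x| ≤ 2R, χ_{R,ε}(x) = e^{ε(3R−|x|)} − 1 for 2R < |x| < 3R, and 0 otherwise. Suppose f ∈ H¹(ℝ³) satisfies ‖χ_{R,ε} f‖_{H¹} ≤ C with C independent of R. Then there exists ε′ > 0 such that e^{ε′|x|} f ∈ H¹(ℝ³). -/

import Mathlib

/-!
On the annulus `3R/2 < |x| < 2R` we have `χ_{R,ε}(x) = e^{ε(|x|-R)} - 1 ≥ e^{εR/2}/2` once `εR ≥ 2`,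
so `e^{ε|x|/8} ≤ e^{εR/4} ≤ 2 e^{-εR/4} χ_{R,ε}(x)` there. Hence the `L²` norms of `e^{ε|x|/8} f`
and, via the product rule, of `e^{ε|x|/8} ∇f` on that annulus are `O(e^{-εR/4})`, uniformly in `R`.
The annuli with `R = R₀ + k` cover `|x| > 2R₀`, and the squared bounds are summable in `k`;
on the ball `|x| ≤ 2R₀` the weight is bounded. A last application of the product rule gives
`∇(e^{ε|x|/8} f) ∈ L²`.
-/

open MeasureTheory Set
open scoped ENNReal

noncomputable section

/-- The exponential weight function `χ_{R,ε}`. -/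
def chiWeight (R ε : ℝ) (x : EuclideanSpace ℝ (Fin 3)) : ℝ :=
  if R < ‖x‖ ∧ ‖x‖ ≤ 2 * R then Real.exp (ε * (‖x‖ - R)) - 1
  else if 2 * R < ‖x‖ ∧ ‖x‖ < 3 * R then Real.exp (ε * (3 * R - ‖x‖)) - 1
  else 0

theorem memLp_of_eLpNorm_restrict_le_of_cover {α E : Type*} [MeasurableSpace α]
    [NormedAddCommGroup E] {μ : Measure α} {p : ℝ≥0∞} (hp0 : p ≠ 0) (hp : p ≠ ∞) {g : α → E}
    (hg : AEStronglyMeasurable g μ) {B : Set α} {S : ℕ → Set α} (hcover : B ∪ ⋃ k, S k = univ)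
    (hB : eLpNorm g p (μ.restrict B) ≠ ∞) {c : ℕ → ℝ≥0∞}
    (hS : ∀ k, eLpNorm g p (μ.restrict (S k)) ≤ c k) (hc : ∑' k, c k ^ p.toReal ≠ ∞) :
    MemLp g p μ := by
  refine ⟨hg, (eLpNorm_lt_top_iff_lintegral_rpow_enorm_lt_top hp0 hp).2 ?_⟩
  have hp' : 0 < p.toReal := ENNReal.toReal_pos hp0 hp
  have hpow (ν : Measure α) : ∫⁻ x, ‖g x‖ₑ ^ p.toReal ∂ν = eLpNorm g p ν ^ p.toReal := by
    rw [eLpNorm_eq_lintegral_rpow_enorm_toReal hp0 hp, ← ENNReal.rpow_mul,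
      one_div_mul_cancel hp'.ne', ENNReal.rpow_one]
  calc ∫⁻ x, ‖g x‖ₑ ^ p.toReal ∂μ = ∫⁻ x in B ∪ ⋃ k, S k, ‖g x‖ₑ ^ p.toReal ∂μ := by
        rw [hcover, Measure.restrict_univ]
    _ ≤ eLpNorm g p (μ.restrict B) ^ p.toReal
          + ∑' k, eLpNorm g p (μ.restrict (S k)) ^ p.toReal := by
        simp only [← hpow]
        exact (lintegral_union_le _ _ _).trans (add_le_add_right (lintegral_iUnion_le _ _) _)
    _ ≤ eLpNorm g p (μ.restrict B) ^ p.toReal + ∑' k, c k ^ p.toReal := by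
        gcongr with k
        exact hS k
    _ < ∞ := ENNReal.add_lt_top.2 ⟨ENNReal.rpow_lt_top_of_nonneg hp'.le hB, hc.lt_top⟩

theorem tsum_ofReal_exp_mul_rpow_ne_top {b q : ℝ} (hb : 0 < b) (hq : 0 < q) (R₀ : ℝ) {K : ℝ≥0∞}
    (hK : K ≠ ∞) : ∑' k : ℕ, (ENNReal.ofReal (Real.exp (-(b * (R₀ + k)))) * K) ^ q ≠ ∞ := by
  have hterm (k : ℕ) : ENNReal.ofReal (Real.exp (-(b * (R₀ + k)))) ^ q
      = ENNReal.ofReal (Real.exp (-(b * q * R₀)) * Real.exp (k * -(b * q))) := by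
    rw [ENNReal.ofReal_rpow_of_nonneg (Real.exp_pos _).le hq.le, ← Real.exp_mul, ← Real.exp_add]
    ring_nf
  have hsum : Summable fun k : ℕ => Real.exp (-(b * q * R₀)) * Real.exp (k * -(b * q)) :=
    (Real.summable_exp_nat_mul_iff.2 (by nlinarith)).mul_left _
  simp only [ENNReal.mul_rpow_of_nonneg _ _ hq.le, hterm, ENNReal.tsum_mul_right,
    ← ENNReal.ofReal_tsum_of_nonneg (fun _ => by positivity) hsum]
  exact ENNReal.mul_ne_top ENNReal.ofReal_ne_top (ENNReal.rpow_ne_top_of_nonneg hq.le hK)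

theorem exists_nat_mem_Ioo_of_two_mul_lt {R₀ r : ℝ} (hR₀ : 3 ≤ R₀) (hr : 2 * R₀ < r) :
    ∃ k : ℕ, r ∈ Ioo (3 / 2 * (R₀ + k)) (2 * (R₀ + k)) := by
  refine ⟨⌊r / 2 - R₀⌋₊ + 1, ?_, ?_⟩ <;> push_cast
  · linarith [Nat.floor_le (show 0 ≤ r / 2 - R₀ by linarith)]
  · linarith [Nat.lt_floor_add_one (r / 2 - R₀)]

theorem closedBall_union_iUnion_annulus {E : Type*} [NormedAddCommGroup E] {R₀ : ℝ} (hR₀ : 3 ≤ R₀) :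
    Metric.closedBall (0 : E) (2 * R₀) ∪ ⋃ k : ℕ, {x | ‖x‖ ∈ Ioo (3 / 2 * (R₀ + k)) (2 * (R₀ + k))}
      = univ := by
  refine eq_univ_of_forall fun x => ?_
  rcases le_or_gt ‖x‖ (2 * R₀) with hx | hx
  · exact Or.inl (mem_closedBall_zero_iff.2 hx)
  · exact Or.inr (mem_iUnion.2 (exists_nat_mem_Ioo_of_two_mul_lt hR₀ hx))

theorem memLp_exp_mul_norm_smul_of_annuli {E F : Type*} [NormedAddCommGroup E] [MeasurableSpace E]
    [OpensMeasurableSpace E] [NormedAddCommGroup F] [NormedSpace ℝ F] {μ : Measure E} {p : ℝ≥0∞}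
    (hp0 : p ≠ 0) (hp : p ≠ ∞) {g : E → F} (hg : MemLp g p μ) {a b R₀ : ℝ} (hb : 0 < b)
    (hR₀ : 3 ≤ R₀) {K : ℝ≥0∞} (hK : K ≠ ∞)
    (hS : ∀ k : ℕ, eLpNorm (fun x => Real.exp (a * ‖x‖) • g x) p
        (μ.restrict {x | ‖x‖ ∈ Ioo (3 / 2 * (R₀ + k)) (2 * (R₀ + k))})
      ≤ ENNReal.ofReal (Real.exp (-(b * (R₀ + k)))) * K) :
    MemLp (fun x => Real.exp (a * ‖x‖) • g x) p μ := by
  have hw : Continuous fun x : E => Real.exp (a * ‖x‖) := by fun_prop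
  refine memLp_of_eLpNorm_restrict_le_of_cover hp0 hp (hw.aestronglyMeasurable.smul hg.1)
    (closedBall_union_iUnion_annulus hR₀) ?_ hS
    (tsum_ofReal_exp_mul_rpow_ne_top hb (ENNReal.toReal_pos hp0 hp) R₀ hK)
  have hball : ∀ᵐ x ∂μ.restrict (Metric.closedBall 0 (2 * R₀)),
      ‖Real.exp (a * ‖x‖) • g x‖ ≤ Real.exp (|a| * (2 * R₀)) * ‖g x‖ := by
    refine ae_restrict_of_forall_mem Metric.isClosed_closedBall.measurableSet fun x hx => ?_
    have hx' : ‖x‖ ≤ 2 * R₀ := mem_closedBall_zero_iff.1 hx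
    rw [norm_smul, Real.norm_of_nonneg (Real.exp_pos _).le]
    gcongr
    exact le_abs_self a
  refine ne_of_lt ?_
  calc _ ≤ _ := eLpNorm_le_mul_eLpNorm_of_ae_le_mul hball p
    _ ≤ ENNReal.ofReal (Real.exp (|a| * (2 * R₀))) * eLpNorm g p μ := by
        gcongr
        exact Measure.restrict_le_self
    _ < ∞ := ENNReal.mul_lt_top ENNReal.ofReal_lt_top hg.2

theorem exists_hasFDerivAt_exp_mul_norm_sub {E : Type*} [NormedAddCommGroup E]
    [InnerProductSpace ℝ E] {x : E} (hx : x ≠ 0) (a c : ℝ) :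
    ∃ L : E →L[ℝ] ℝ, HasFDerivAt (fun y => Real.exp (a * (‖y‖ - c))) L x ∧
      ‖L‖ ≤ |a| * Real.exp (a * (‖x‖ - c)) := by
  have hN : HasFDerivAt (‖·‖) (fderiv ℝ (‖·‖) x) x :=
    (differentiableAt_id.norm ℝ hx).hasFDerivAt
  have hN₁ : ‖fderiv ℝ (‖·‖) x‖ ≤ 1 := by
    simpa using hN.le_of_lipschitz lipschitzWith_one_norm
  refine ⟨Real.exp (a * (‖x‖ - c)) • a • fderiv ℝ (‖·‖) x,
    (Real.hasDerivAt_exp _).comp_hasFDerivAt x ((hN.sub_const c).const_mul a), ?_⟩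
  rw [norm_smul, norm_smul, Real.norm_of_nonneg (Real.exp_pos _).le, Real.norm_eq_abs]
  calc Real.exp (a * (‖x‖ - c)) * (|a| * ‖fderiv ℝ (‖·‖) x‖)
      ≤ Real.exp (a * (‖x‖ - c)) * (|a| * 1) := by gcongr
    _ = |a| * Real.exp (a * (‖x‖ - c)) := by ring

section ProductRule

variable {E F : Type*} [NormedAddCommGroup E] [NormedSpace ℝ E] [NormedAddCommGroup F]
  [NormedSpace ℝ F] {φ : E → ℝ} {L : E →L[ℝ] ℝ} {f : E → F} {x : E}

theorem norm_fderiv_smul_le (hφ : HasFDerivAt φ L x) (hf : DifferentiableAt ℝ f x) :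
    ‖fderiv ℝ (fun y => φ y • f y) x‖ ≤ |φ x| * ‖fderiv ℝ f x‖ + ‖L‖ * ‖f x‖ := by
  change ‖fderiv ℝ (φ • f) x‖ ≤ _
  rw [fderiv_smul hφ.differentiableAt hf, hφ.fderiv]
  refine (norm_add_le _ _).trans_eq ?_
  rw [norm_smul, ContinuousLinearMap.norm_smulRight_apply, Real.norm_eq_abs]

theorem abs_mul_norm_fderiv_le (hφ : HasFDerivAt φ L x) (hf : DifferentiableAt ℝ f x) :
    |φ x| * ‖fderiv ℝ f x‖ ≤ ‖fderiv ℝ (fun y => φ y • f y) x‖ + ‖L‖ * ‖f x‖ := by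
  have h := norm_le_add_norm_add (φ x • fderiv ℝ f x) (L.smulRight (f x))
  rwa [← hφ.fderiv, ← fderiv_smul hφ.differentiableAt hf, norm_smul, Real.norm_eq_abs,
    ContinuousLinearMap.norm_smulRight_apply, hφ.fderiv] at h

end ProductRule

theorem memLp_fderiv_exp_mul_norm_smul {E F : Type*} [NormedAddCommGroup E]
    [InnerProductSpace ℝ E] [FiniteDimensional ℝ E] [MeasurableSpace E] [OpensMeasurableSpace E]
    [NormedAddCommGroup F] [NormedSpace ℝ F] [FiniteDimensional ℝ F] {μ : Measure E}
    [NullSingletonClass μ] {f : E → F} (hf : Differentiable ℝ f) {a : ℝ} {p : ℝ≥0∞}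
    (hwf : MemLp (fun x => Real.exp (a * ‖x‖) • f x) p μ)
    (hwdf : MemLp (fun x => Real.exp (a * ‖x‖) • fderiv ℝ f x) p μ) :
    MemLp (fderiv ℝ (fun x => Real.exp (a * ‖x‖) • f x)) p μ := by
  refine (hwdf.norm.add (hwf.norm.const_mul |a|)).of_le
    (measurable_fderiv ℝ _).aestronglyMeasurable ?_
  filter_upwards [compl_mem_ae_iff.2 (measure_singleton (0 : E))] with x hx
  obtain ⟨L, hL, hL_le⟩ := exists_hasFDerivAt_exp_mul_norm_sub hx a 0
  simp only [sub_zero] at hL hL_le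
  refine (norm_fderiv_smul_le hL (hf x)).trans (le_trans ?_ (Real.le_norm_self _))
  rw [Pi.add_apply, norm_smul, norm_smul, Real.norm_eq_abs]
  refine add_le_add le_rfl ?_
  calc ‖L‖ * ‖f x‖ ≤ |a| * Real.exp (a * ‖x‖) * ‖f x‖ := by gcongr
    _ = |a| * (|Real.exp (a * ‖x‖)| * ‖f x‖) := by
        rw [abs_of_pos (Real.exp_pos _), mul_assoc]

section Annulus

local notation "ℝ³" => EuclideanSpace ℝ (Fin 3)

variable {F : Type*} [NormedAddCommGroup F] [NormedSpace ℝ F] {R ε : ℝ} {x : ℝ³}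

theorem chiWeight_of_lt_of_le (h₁ : R < ‖x‖) (h₂ : ‖x‖ ≤ 2 * R) :
    chiWeight R ε x = Real.exp (ε * (‖x‖ - R)) - 1 :=
  if_pos ⟨h₁, h₂⟩

theorem measurable_chiWeight : Measurable (chiWeight R ε) := by
  refine Measurable.ite ?_ (by fun_prop) (Measurable.ite ?_ (by fun_prop) measurable_const)
  · exact (measurableSet_lt measurable_const measurable_norm).inter
      (measurableSet_le measurable_norm measurable_const)
  · exact (measurableSet_lt measurable_const measurable_norm).inter
      (measurableSet_lt measurable_norm measurable_const)

theorem exp_mul_norm_le_chiWeight (hεR : 2 ≤ ε * R) (h₁ : 3 / 2 * R < ‖x‖) (h₂ : ‖x‖ ≤ 2 * R) :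
    Real.exp (ε / 8 * ‖x‖) ≤ Real.exp (-(ε / 4 * R)) * (2 * chiWeight R ε x) := by
  have hR : 0 < R := by linarith [norm_nonneg x]
  have hε : 0 < ε := pos_of_mul_pos_left (by linarith) hR.le
  rw [chiWeight_of_lt_of_le (by linarith) h₂]
  have htwo : 2 ≤ Real.exp (ε / 2 * R) := by linarith [Real.add_one_le_exp (ε / 2 * R)]
  have hmono : Real.exp (ε / 2 * R) ≤ Real.exp (ε * (‖x‖ - R)) := Real.exp_le_exp.2 (by nlinarith)
  calc Real.exp (ε / 8 * ‖x‖) ≤ Real.exp (ε / 4 * R) := Real.exp_le_exp.2 (by nlinarith)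
    _ = Real.exp (-(ε / 4 * R)) * Real.exp (ε / 2 * R) := by rw [← Real.exp_add]; ring_nf
    _ ≤ Real.exp (-(ε / 4 * R)) * (2 * (Real.exp (ε * (‖x‖ - R)) - 1)) := by gcongr; linarith

theorem exists_hasFDerivAt_chiWeight (hR : 0 ≤ R) (h₁ : R < ‖x‖) (h₂ : ‖x‖ < 2 * R) :
    ∃ L : ℝ³ →L[ℝ] ℝ, HasFDerivAt (chiWeight R ε) L x ∧ ‖L‖ ≤ |ε| * (chiWeight R ε x + 1) := by
  obtain ⟨L, hL, hL_le⟩ :=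
    exists_hasFDerivAt_exp_mul_norm_sub (norm_pos_iff.1 (hR.trans_lt h₁)) ε R
  have hloc : chiWeight R ε =ᶠ[nhds x] fun y => Real.exp (ε * (‖y‖ - R)) - 1 := by
    filter_upwards [continuous_norm.continuousAt.preimage_mem_nhds (Ioo_mem_nhds h₁ h₂)]
      with y hy
    exact chiWeight_of_lt_of_le hy.1 hy.2.le
  refine ⟨L, (hL.sub_const 1).congr_of_eventuallyEq hloc, ?_⟩
  rwa [chiWeight_of_lt_of_le h₁ h₂.le, sub_add_cancel]

theorem abs_chiWeight_mul_norm_fderiv_le {f : ℝ³ → F} (hf : DifferentiableAt ℝ f x) (hR : 0 ≤ R)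
    (h₁ : R < ‖x‖) (h₂ : ‖x‖ < 2 * R) :
    |chiWeight R ε x| * ‖fderiv ℝ f x‖ ≤ ‖fderiv ℝ (fun y => chiWeight R ε y • f y) x‖
      + |ε| * ‖chiWeight R ε x • f x‖ + |ε| * ‖f x‖ := by
  obtain ⟨L, hL, hL_le⟩ := exists_hasFDerivAt_chiWeight (ε := ε) hR h₁ h₂
  rw [norm_smul, Real.norm_eq_abs]
  calc _ ≤ _ := abs_mul_norm_fderiv_le hL hf
    _ ≤ ‖fderiv ℝ (fun y => chiWeight R ε y • f y) x‖ + |ε| * (|chiWeight R ε x| + 1) * ‖f x‖ := by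
        gcongr
        exact hL_le.trans (by gcongr; exact le_abs_self _)
    _ = _ := by ring

theorem eLpNorm_exp_smul_restrict_annulus_le (hεR : 2 ≤ ε * R) (f : ℝ³ → F) (p : ℝ≥0∞)
    (μ : Measure ℝ³) :
    eLpNorm (fun x => Real.exp (ε / 8 * ‖x‖) • f x) p
        (μ.restrict {x | ‖x‖ ∈ Ioo (3 / 2 * R) (2 * R)})
      ≤ ENNReal.ofReal (Real.exp (-(ε / 4 * R))) *
        (2 * eLpNorm (fun x => chiWeight R ε x • f x) p μ) := by
  have hbound : ∀ᵐ x ∂μ.restrict {x | ‖x‖ ∈ Ioo (3 / 2 * R) (2 * R)},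
      ‖Real.exp (ε / 8 * ‖x‖) • f x‖
        ≤ Real.exp (-(ε / 4 * R)) * 2 * ‖chiWeight R ε x • f x‖ := by
    refine ae_restrict_of_forall_mem (measurable_norm measurableSet_Ioo) fun x hx => ?_
    rw [norm_smul, norm_smul, Real.norm_of_nonneg (Real.exp_pos _).le, Real.norm_eq_abs]
    calc Real.exp (ε / 8 * ‖x‖) * ‖f x‖
        ≤ Real.exp (-(ε / 4 * R)) * (2 * chiWeight R ε x) * ‖f x‖ := by
          gcongr
          exact exp_mul_norm_le_chiWeight hεR hx.1 hx.2.le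
      _ ≤ Real.exp (-(ε / 4 * R)) * (2 * |chiWeight R ε x|) * ‖f x‖ := by
          gcongr
          exact le_abs_self _
      _ = _ := by ring
  calc _ ≤ _ := eLpNorm_le_mul_eLpNorm_of_ae_le_mul hbound p
    _ ≤ ENNReal.ofReal (Real.exp (-(ε / 4 * R)) * 2) *
          eLpNorm (fun x => chiWeight R ε x • f x) p μ := by
        gcongr
        exact Measure.restrict_le_self
    _ = _ := by rw [ENNReal.ofReal_mul (Real.exp_pos _).le, ENNReal.ofReal_ofNat, mul_assoc]

theorem eLpNorm_exp_smul_fderiv_restrict_annulus_le [CompleteSpace F] (hεR : 2 ≤ ε * R)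
    {f : ℝ³ → F} (hf : Differentiable ℝ f) {p : ℝ≥0∞} (hp : 1 ≤ p) (μ : Measure ℝ³) :
    eLpNorm (fun x => Real.exp (ε / 8 * ‖x‖) • fderiv ℝ f x) p
        (μ.restrict {x | ‖x‖ ∈ Ioo (3 / 2 * R) (2 * R)})
      ≤ ENNReal.ofReal (Real.exp (-(ε / 4 * R))) *
        (2 * (eLpNorm (fderiv ℝ (fun x => chiWeight R ε x • f x)) p μ
          + ‖ε‖ₑ * eLpNorm (fun x => chiWeight R ε x • f x) p μ + ‖ε‖ₑ * eLpNorm f p μ)) := by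
  set h : ℝ³ → ℝ := (fun x => ‖fderiv ℝ (fun y => chiWeight R ε y • f y) x‖)
    + |ε| • (fun x => ‖chiWeight R ε x • f x‖) + |ε| • fun x => ‖f x‖
  have hbound : ∀ᵐ x ∂μ.restrict {x | ‖x‖ ∈ Ioo (3 / 2 * R) (2 * R)},
      ‖Real.exp (ε / 8 * ‖x‖) • fderiv ℝ f x‖ ≤ Real.exp (-(ε / 4 * R)) * 2 * ‖h x‖ := by
    refine ae_restrict_of_forall_mem (measurable_norm measurableSet_Ioo) fun x hx => ?_
    have hR : 0 ≤ R := by linarith [hx.1, hx.2]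
    rw [norm_smul, Real.norm_of_nonneg (Real.exp_pos _).le]
    calc Real.exp (ε / 8 * ‖x‖) * ‖fderiv ℝ f x‖
        ≤ Real.exp (-(ε / 4 * R)) * (2 * |chiWeight R ε x|) * ‖fderiv ℝ f x‖ := by
          gcongr
          exact (exp_mul_norm_le_chiWeight hεR hx.1 hx.2.le).trans (by gcongr; exact le_abs_self _)
      _ = Real.exp (-(ε / 4 * R)) * 2 * (|chiWeight R ε x| * ‖fderiv ℝ f x‖) := by ring
      _ ≤ Real.exp (-(ε / 4 * R)) * 2 * ‖h x‖ := by
          gcongr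
          refine (abs_chiWeight_mul_norm_fderiv_le (hf x) hR (by linarith [hx.1]) hx.2).trans ?_
          exact le_of_eq_of_le (by simp [h]) (Real.le_norm_self _)
  have hχf : AEStronglyMeasurable (fun x => ‖chiWeight R ε x • f x‖) μ :=
    (measurable_chiWeight.aestronglyMeasurable.smul hf.continuous.aestronglyMeasurable).norm
  have hh : eLpNorm h p μ ≤ eLpNorm (fderiv ℝ (fun x => chiWeight R ε x • f x)) p μ
      + ‖ε‖ₑ * eLpNorm (fun x => chiWeight R ε x • f x) p μ + ‖ε‖ₑ * eLpNorm f p μ := by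
    refine (eLpNorm_add_le (((measurable_fderiv ℝ _).norm.aestronglyMeasurable).add
      (hχf.const_smul _)) (hf.continuous.aestronglyMeasurable.norm.const_smul _) hp).trans ?_
    refine add_le_add (eLpNorm_add_le (measurable_fderiv ℝ _).norm.aestronglyMeasurable
      (hχf.const_smul _) hp) le_rfl |>.trans_eq ?_
    simp only [eLpNorm_const_smul, eLpNorm_norm, Real.enorm_abs]
  calc _ ≤ _ := eLpNorm_le_mul_eLpNorm_of_ae_le_mul hbound p
    _ ≤ ENNReal.ofReal (Real.exp (-(ε / 4 * R)) * 2) * eLpNorm h p μ := by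
        gcongr
        exact Measure.restrict_le_self
    _ ≤ _ := by
        rw [ENNReal.ofReal_mul (Real.exp_pos _).le, ENNReal.ofReal_ofNat, mul_assoc]
        gcongr

end Annulus

/-- Exponential decay bootstrap lemma: if `‖χ_{R,ε} f‖_{H¹} ≤ C` uniformly in `R`
for some small `ε > 0`, then `e^{ε'|x|} f ∈ H¹` for some `ε' > 0`. -/
theorem exponential_decay_bootstrap
    (f : EuclideanSpace ℝ (Fin 3) → ℂ)
    (hf : Differentiable ℝ f)
    (hf2 : MemLp f 2 volume) (hdf2 : MemLp (fderiv ℝ f) 2 volume)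
    (hchi : ∃ ε : ℝ, 0 < ε ∧ ∃ C : ℝ, ∀ R : ℝ, 0 < R →
      eLpNorm (fun x => chiWeight R ε x • f x) 2 volume
        + eLpNorm (fderiv ℝ (fun x => chiWeight R ε x • f x)) 2 volume
        ≤ ENNReal.ofReal C) :
    ∃ ε' : ℝ, 0 < ε' ∧
      MemLp (fun x => Real.exp (ε' * ‖x‖) • f x) 2 volume ∧
      MemLp (fderiv ℝ (fun x => Real.exp (ε' * ‖x‖) • f x)) 2 volume := by
  obtain ⟨ε, hε, C, hC⟩ := hchi
  set R₀ := max 3 (2 / ε)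
  have hεR (k : ℕ) : 2 ≤ ε * (R₀ + k) := by
    have := (div_le_iff₀' hε).1 (le_max_right 3 (2 / ε))
    nlinarith [(Nat.cast_nonneg k : (0 : ℝ) ≤ k)]
  have hR (k : ℕ) : 0 < R₀ + k := by positivity
  have hwf : MemLp (fun x => Real.exp (ε / 8 * ‖x‖) • f x) 2 volume :=
    memLp_exp_mul_norm_smul_of_annuli two_ne_zero ENNReal.ofNat_ne_top hf2 (b := ε / 4)
      (by positivity) (le_max_left _ _) (K := 2 * ENNReal.ofReal C) (by finiteness) fun k =>
      (eLpNorm_exp_smul_restrict_annulus_le (hεR k) f 2 volume).trans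
        (by gcongr; exact le_self_add.trans (hC _ (hR k)))
  have hwdf : MemLp (fun x => Real.exp (ε / 8 * ‖x‖) • fderiv ℝ f x) 2 volume :=
    memLp_exp_mul_norm_smul_of_annuli two_ne_zero ENNReal.ofNat_ne_top hdf2 (b := ε / 4)
      (by positivity) (le_max_left _ _)
      (K := 2 * (ENNReal.ofReal C + ‖ε‖ₑ * ENNReal.ofReal C + ‖ε‖ₑ * eLpNorm f 2 volume))
      (by have := hf2.eLpNorm_ne_top; finiteness) fun k =>
      (eLpNorm_exp_smul_fderiv_restrict_annulus_le (hεR k) hf one_le_two volume).trans <| by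
        gcongr
        · exact le_add_self.trans (hC _ (hR k))
        · exact le_self_add.trans (hC _ (hR k))
  exact ⟨ε / 8, by positivity, hwf, memLp_fderiv_exp_mul_norm_smul hf hwf hwdf⟩
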